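/- arXiv:1905.02642 — 6 statements merged into one kernel-verified Lean document; each statement's English description precedes it below -/
import Mathlib

section
/- Let ψ : ℝ → ℝ be three times differentiable with ψ'(φ) > 0, a > 0, R(φ) = a/(1+ψ'(φ)) and Ξ_P(φ) = −R(φ)·exp(i·ψ(φ)). Then |Ξ_P'(φ)| = a·w(φ)/(1+ψ'(φ))² with w(φ) = sqrt(ψ''(φ)² + ψ'(φ)²·(1+ψ'(φ))²); in particular the two centrodes X_P(φ) = (a·ψ'(φ)/(1+ψ'(φ)))·exp(−iφ) and Ξ_P have derivatives of equal modulus at every φ. -/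
/-!
Both centrodes are curves in polar form `r(t) · exp(i θ(t))`, whose speed is
`√(r'² + (r θ')²)`. With `f = a ψ' / (1 + ψ')`, the drive centrode is `f · exp(-i t)` and
the driven one is `(f - a) · exp(i ψ)`: the radii differ by a constant and
`|f - a| · ψ' = f`, so the two speeds coincide, and `f' = a ψ'' / (1 + ψ')²` gives the
closed form.
-/

open Complex

theorem hasDerivAt_ofReal_mul_exp_mul_I {r θ : ℝ → ℝ} {r' θ' t : ℝ}
    (hr : HasDerivAt r r' t) (hθ : HasDerivAt θ θ' t) :
    HasDerivAt (fun s => (r s : ℂ) * exp (θ s * I))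
      ((r' + r t * θ' * I) * exp (θ t * I)) t := by
  refine (hr.ofReal_comp.mul (hθ.ofReal_comp.mul_const I).cexp).congr_deriv ?_
  ring

theorem norm_deriv_ofReal_mul_exp_mul_I {r θ : ℝ → ℝ} {r' θ' t : ℝ}
    (hr : HasDerivAt r r' t) (hθ : HasDerivAt θ θ' t) :
    ‖deriv (fun s => (r s : ℂ) * exp (θ s * I)) t‖ = √(r' ^ 2 + (r t * θ') ^ 2) := by
  rw [(hasDerivAt_ofReal_mul_exp_mul_I hr hθ).deriv, norm_mul, norm_exp_ofReal_mul_I, mul_one,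
    ← ofReal_mul, norm_add_mul_I]

theorem hasDerivAt_mul_div_one_add {g : ℝ → ℝ} {g' t : ℝ} (a : ℝ) (hg : HasDerivAt g g' t)
    (hg₀ : 1 + g t ≠ 0) :
    HasDerivAt (fun s => a * g s / (1 + g s)) (a * g' / (1 + g t) ^ 2) t := by
  refine ((hg.const_mul a).div ((hasDerivAt_const t 1).add hg) hg₀).congr_deriv ?_
  simp only [Pi.add_apply]
  field_simp
  ring

theorem sqrt_sq_div_sq_add_sq_div {a s p q : ℝ} (ha : 0 ≤ a) (hs : s ≠ 0) :
    √((a * q / s ^ 2) ^ 2 + (a * p / s) ^ 2) = a * √(q ^ 2 + p ^ 2 * s ^ 2) / s ^ 2 := by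
  rw [show (a * q / s ^ 2) ^ 2 + (a * p / s) ^ 2 = (a / s ^ 2) ^ 2 * (q ^ 2 + p ^ 2 * s ^ 2) by
      field_simp,
    Real.sqrt_mul (sq_nonneg _), Real.sqrt_sq (by positivity)]
  ring

theorem abs_deriv_centrode_driven_general
    (ψ ψ' ψ'' : ℝ → ℝ) (a : ℝ) (ha : 0 < a)
    (hd1 : ∀ t, HasDerivAt ψ (ψ' t) t)
    (hd2 : ∀ t, HasDerivAt ψ' (ψ'' t) t)
    (hpos : ∀ t, 0 < ψ' t)
    (R : ℝ → ℝ) (hR : ∀ t, R t = a / (1 + ψ' t))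
    (Ξ_P : ℝ → ℂ)
    (hΞ : ∀ t, Ξ_P t = -(R t : ℂ) * Complex.exp ((ψ t : ℂ) * Complex.I))
    (X_P : ℝ → ℂ)
    (hX : ∀ t, X_P t =
      ((a * ψ' t / (1 + ψ' t) : ℝ) : ℂ) * Complex.exp (-(t : ℂ) * Complex.I))
    (w : ℝ → ℝ)
    (hw : ∀ t, w t = Real.sqrt ((ψ'' t) ^ 2 + (ψ' t) ^ 2 * (1 + ψ' t) ^ 2))
    (φ : ℝ) :
    ‖deriv Ξ_P φ‖ = a * w φ / (1 + ψ' φ) ^ 2 ∧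
    ‖deriv X_P φ‖ = ‖deriv Ξ_P φ‖ := by
  have hs : ∀ t, 1 + ψ' t ≠ 0 := fun t => by linarith [hpos t]
  set f : ℝ → ℝ := fun t => a * ψ' t / (1 + ψ' t)
  have hf : HasDerivAt f (a * ψ'' φ / (1 + ψ' φ) ^ 2) φ :=
    hasDerivAt_mul_div_one_add a (hd2 φ) (hs φ)
  have hΞ_polar : Ξ_P = fun t => ((f t - a : ℝ) : ℂ) * exp (ψ t * I) := by
    funext t
    rw [hΞ, hR, ← ofReal_neg]
    congr 3
    simp only [f]
    field_simp [hs t]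
    ring
  have hX_polar : X_P = fun t => (f t : ℂ) * exp (((-t : ℝ) : ℂ) * I) := by
    funext t
    rw [hX, ofReal_neg]
  have hnormΞ : ‖deriv Ξ_P φ‖ = a * w φ / (1 + ψ' φ) ^ 2 := by
    rw [hΞ_polar, norm_deriv_ofReal_mul_exp_mul_I (hf.sub_const a) (hd1 φ), hw,
      ← sqrt_sq_div_sq_add_sq_div ha.le (hs φ)]
    congr 2
    simp only [f]
    field_simp [hs φ]
    ring
  have hnormX : ‖deriv X_P φ‖ = a * w φ / (1 + ψ' φ) ^ 2 := by
    rw [hX_polar, norm_deriv_ofReal_mul_exp_mul_I hf (hasDerivAt_neg φ), hw,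
      ← sqrt_sq_div_sq_add_sq_div ha.le (hs φ)]
    congr 2
    ring
  exact ⟨hnormΞ, hnormX.trans hnormΞ.symm⟩

theorem abs_deriv_centrode_driven
    (ψ ψ' ψ'' ψ''' : ℝ → ℝ) (a : ℝ) (ha : 0 < a)
    (hd1 : ∀ t, HasDerivAt ψ (ψ' t) t)
    (hd2 : ∀ t, HasDerivAt ψ' (ψ'' t) t)
    (hd3 : ∀ t, HasDerivAt ψ'' (ψ''' t) t)
    (hpos : ∀ t, 0 < ψ' t)
    (R : ℝ → ℝ) (hR : ∀ t, R t = a / (1 + ψ' t))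
    (Ξ_P : ℝ → ℂ)
    (hΞ : ∀ t, Ξ_P t = -(R t : ℂ) * Complex.exp ((ψ t : ℂ) * Complex.I))
    (X_P : ℝ → ℂ)
    (hX : ∀ t, X_P t =
      ((a * ψ' t / (1 + ψ' t) : ℝ) : ℂ) * Complex.exp (-(t : ℂ) * Complex.I))
    (w : ℝ → ℝ)
    (hw : ∀ t, w t = Real.sqrt ((ψ'' t) ^ 2 + (ψ' t) ^ 2 * (1 + ψ' t) ^ 2))
    (φ : ℝ) :
    ‖deriv Ξ_P φ‖ = a * w φ / (1 + ψ' φ) ^ 2 ∧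
    ‖deriv X_P φ‖ = ‖deriv Ξ_P φ‖ :=
  abs_deriv_centrode_driven_general ψ ψ' ψ'' a ha hd1 hd2 hpos R hR Ξ_P hΞ X_P hX w hw φ
end

section
/- Let ψ be three times differentiable with ψ' > 0 and w(φ) = sqrt(ψ''(φ)² + ψ'(φ)²(1+ψ'(φ))²) > 0. Define the unit tangent T(φ) = (ψ''(φ) − i·ψ'(φ)(1+ψ'(φ)))/w(φ) · exp(−iφ). Then T'(φ) = i·h(φ)·T(φ), where h(φ) = (1+ψ'(φ))·[ψ'(φ)·(ψ'''(φ) − ψ'(φ) − ψ'(φ)²) − 2ψ''(φ)²]/w(φ)². -/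
/-!
Write `T = u / |u| · exp (-iφ)` with `u = ψ'' - iψ'(1 + ψ')`. A unit vector `u / |u|` turns with
angular velocity `Im (u' ū) / |u|²`, and the factor `exp (-iφ)` lowers it by one. Since
`u' = ψ''' - iψ''(1 + 2ψ')`, `Im (u' ū) = ψ'''ψ'(1 + ψ') - ψ''²(1 + 2ψ')`, and subtracting
`|u|² = w²` from it leaves the numerator of `h`.
-/

open Complex ComplexConjugate

open scoped RealInnerProductSpace in
theorem HasDerivAt.norm {F : Type*} [NormedAddCommGroup F] [InnerProductSpace ℝ F]
    {f : ℝ → F} {f' : F} {x : ℝ} (hf : HasDerivAt f f' x) (h0 : f x ≠ 0) :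
    HasDerivAt (‖f ·‖) (⟪f x, f'⟫ / ‖f x‖) x := by
  have hsq : HasDerivAt (fun y => √(‖f y‖ ^ 2)) (2 * ⟪f x, f'⟫ / (2 * √(‖f x‖ ^ 2))) x :=
    hf.norm_sq.sqrt (by positivity)
  simp only [Real.sqrt_sq (norm_nonneg _)] at hsq
  convert hsq using 1
  field_simp

theorem HasDerivAt.div_norm {u : ℝ → ℂ} {u' : ℂ} {t : ℝ} (hu : HasDerivAt u u' t)
    (h0 : u t ≠ 0) :
    HasDerivAt (fun s => u s / ‖u s‖)
      (I * ((u' * conj (u t)).im / ‖u t‖ ^ 2 : ℝ) * (u t / ‖u t‖)) t := by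
  have hnorm : (‖u t‖ : ℂ) ≠ 0 := by exact_mod_cast norm_ne_zero_iff.mpr h0
  refine (hu.div (hu.norm h0).ofReal_comp hnorm).congr_deriv ?_
  have hconj : u t * conj (u t) = (‖u t‖ : ℂ) ^ 2 := mul_conj' _
  have hsplit : u' * conj (u t) = (u' * conj (u t)).re + (u' * conj (u t)).im * I :=
    (re_add_im _).symm
  rw [Complex.inner]
  push_cast
  field_simp
  linear_combination (-u') * hconj + u t * hsplit

theorem HasDerivAt.mul_exp_neg_mul_I {f : ℝ → ℂ} {k : ℂ} {t : ℝ}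
    (hf : HasDerivAt f (I * k * f t) t) :
    HasDerivAt (fun s => f s * cexp (-(s : ℂ) * I))
      (I * (k - 1) * (f t * cexp (-(t : ℂ) * I))) t := by
  have hexp : HasDerivAt (fun s : ℝ => cexp (-(s : ℂ) * I)) (cexp (-(t : ℂ) * I) * (-1 * I)) t :=
    (((hasDerivAt_id t).ofReal_comp).neg.mul_const I).cexp
  exact (hf.mul hexp).congr_deriv (by ring)

/-- Up to the positive factor `a / (1 + ψ')²` and the rotation `exp (-iφ)`, this is the velocity
`X_P'` of the drive-gear centrode `X_P = a ψ' / (1 + ψ') exp (-iφ)`. -/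
def centrodeDir (ψ' ψ'' : ℝ → ℝ) (t : ℝ) : ℂ :=
  ψ'' t - I * ψ' t * (1 + ψ' t)

section centrodeDir

variable {ψ' ψ'' ψ''' : ℝ → ℝ}

theorem norm_centrodeDir (t : ℝ) :
    ‖centrodeDir ψ' ψ'' t‖ = √(ψ'' t ^ 2 + ψ' t ^ 2 * (1 + ψ' t) ^ 2) := by
  rw [centrodeDir, norm_eq_sqrt_sq_add_sq]
  congr 1
  simp only [sub_re, ofReal_re, mul_re, I_re, zero_mul, I_im, ofReal_im, mul_zero, sub_self, add_re,
    one_re, mul_im, one_mul, zero_add, add_im, one_im, add_zero, sub_zero, sub_im, zero_sub, even_two,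
    Even.neg_pow, add_right_inj]
  ring

theorem hasDerivAt_centrodeDir {t : ℝ} (hd2 : HasDerivAt ψ' (ψ'' t) t)
    (hd3 : HasDerivAt ψ'' (ψ''' t) t) :
    HasDerivAt (centrodeDir ψ' ψ'') (ψ''' t - I * ψ'' t * (1 + 2 * ψ' t)) t := by
  have hd2C := hd2.ofReal_comp
  refine (hd3.ofReal_comp.sub ((hd2C.const_mul I).mul (hd2C.const_add 1))).congr_deriv ?_
  ring

theorem im_mul_conj_centrodeDir (t : ℝ) (c : ℝ) :
    ((c - I * ψ'' t * (1 + 2 * ψ' t)) * conj (centrodeDir ψ' ψ'' t)).im =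
      c * ψ' t * (1 + ψ' t) - ψ'' t ^ 2 * (1 + 2 * ψ' t) := by
  simp only [centrodeDir, map_sub, conj_ofReal, map_mul, conj_I, neg_mul, map_add, map_one,
    sub_neg_eq_add, mul_im, sub_re, ofReal_re, mul_re, I_re, zero_mul, I_im, ofReal_im, mul_zero,
    sub_self, add_re, one_re, re_ofNat, im_ofNat, sub_zero, one_mul, zero_add, add_im, one_im,
    add_zero, sub_im, zero_sub]
  ring

end centrodeDir

theorem deriv_unit_tangent_drive_general
    (ψ' ψ'' ψ''' : ℝ → ℝ)
    (hd2 : ∀ t, HasDerivAt ψ' (ψ'' t) t)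
    (hd3 : ∀ t, HasDerivAt ψ'' (ψ''' t) t)
    (w : ℝ → ℝ)
    (hw : ∀ t, w t = Real.sqrt ((ψ'' t) ^ 2 + (ψ' t) ^ 2 * (1 + ψ' t) ^ 2))
    (hwpos : ∀ t, 0 < w t)
    (T : ℝ → ℂ)
    (hT : ∀ t, T t =
      (((ψ'' t : ℂ) - Complex.I * (ψ' t : ℂ) * (1 + (ψ' t : ℂ))) / (w t : ℂ)) *
        Complex.exp (-(t : ℂ) * Complex.I))
    (h : ℝ → ℝ)
    (hh : ∀ t, h t =
      (1 + ψ' t) * (ψ' t * (ψ''' t - ψ' t - (ψ' t) ^ 2) - 2 * (ψ'' t) ^ 2) / (w t) ^ 2)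
    (φ : ℝ) :
    deriv T φ = Complex.I * (h φ : ℂ) * T φ := by
  have hw_norm (t : ℝ) : w t = ‖centrodeDir ψ' ψ'' t‖ := (hw t).trans (norm_centrodeDir t).symm
  have hT_eq : T = fun t => centrodeDir ψ' ψ'' t / ‖centrodeDir ψ' ψ'' t‖ * cexp (-(t : ℂ) * I) :=
    funext fun t => by rw [hT, hw_norm]; rfl
  have hu0 : centrodeDir ψ' ψ'' φ ≠ 0 := norm_pos_iff.mp (hw_norm φ ▸ hwpos φ)
  have hwsq : w φ ^ 2 = ψ'' φ ^ 2 + ψ' φ ^ 2 * (1 + ψ' φ) ^ 2 := by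
    rw [hw φ, Real.sq_sqrt (by positivity)]
  have hangular :
      ((ψ''' φ * ψ' φ * (1 + ψ' φ) - ψ'' φ ^ 2 * (1 + 2 * ψ' φ)) / w φ ^ 2 : ℝ) - 1 = h φ := by
    have hw0 := (hwpos φ).ne'
    rw [hh φ]
    field_simp
    linear_combination (-1) * hwsq
  rw [hT_eq, ((hasDerivAt_centrodeDir (hd2 φ) (hd3 φ)).div_norm hu0).mul_exp_neg_mul_I.deriv,
    im_mul_conj_centrodeDir, ← hangular]
  simp only [← hw_norm]
  push_cast
  rfl

theorem deriv_unit_tangent_drive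
    (ψ ψ' ψ'' ψ''' : ℝ → ℝ)
    (hd1 : ∀ t, HasDerivAt ψ (ψ' t) t)
    (hd2 : ∀ t, HasDerivAt ψ' (ψ'' t) t)
    (hd3 : ∀ t, HasDerivAt ψ'' (ψ''' t) t)
    (hpos : ∀ t, 0 < ψ' t)
    (w : ℝ → ℝ)
    (hw : ∀ t, w t = Real.sqrt ((ψ'' t) ^ 2 + (ψ' t) ^ 2 * (1 + ψ' t) ^ 2))
    (hwpos : ∀ t, 0 < w t)
    (T : ℝ → ℂ)
    (hT : ∀ t, T t =
      (((ψ'' t : ℂ) - Complex.I * (ψ' t : ℂ) * (1 + (ψ' t : ℂ))) / (w t : ℂ)) *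
        Complex.exp (-(t : ℂ) * Complex.I))
    (h : ℝ → ℝ)
    (hh : ∀ t, h t =
      (1 + ψ' t) * (ψ' t * (ψ''' t - ψ' t - (ψ' t) ^ 2) - 2 * (ψ'' t) ^ 2) / (w t) ^ 2)
    (φ : ℝ) :
    deriv T φ = Complex.I * (h φ : ℂ) * T φ :=
  deriv_unit_tangent_drive_general ψ' ψ'' ψ''' hd2 hd3 w hw hwpos T hT h hh φ
end

section
/- Let A, B : ℝ → ℂ be differentiable with A(φ) ≠ B(φ) and [A(φ)−B(φ), A'(φ)−B'(φ)] ≠ 0. Then the unique solution X of the linear system [A−B, X] = [A,B], [(A−B)', X] = [A,B]' is X = ([A,B]·(A−B)' − [A,B]'·(A−B)) · (2i) / (conj(A−B)·(A−B)' − (A−B)·conj((A−B)')), equivalently X = ([A,B]·(A−B)' − [A,B]'·(A−B)) / [A−B, (A−B)']. -/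
noncomputable def ext (A B : ℂ) : ℂ :=
  Complex.I / 2 * (A * (starRingEnd ℂ) B - (starRingEnd ℂ) A * B)

local notation "conj" => starRingEnd ℂ

lemma key (u v e d X : ℂ) (hce : conj e = e) (hcd : conj d = d)
    (hdet : Complex.I/2*(u*conj v - conj u * v) ≠ 0) :
    (Complex.I/2*(u*conj X - conj u*X) = e ∧ Complex.I/2*(v*conj X - conj v*X) = d) ↔
    (X = (e*v - d*u)*(2*Complex.I)/(conj u * v - u * conj v) ∧
     X = (e*v-d*u)/(Complex.I/2*(u*conj v - conj u*v))) := by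
  have hI : (Complex.I : ℂ) ≠ 0 := Complex.I_ne_zero
  have hden : u*conj v - conj u*v ≠ 0 := by
    intro h; apply hdet; rw [h]; ring
  have hden2 : conj u * v - u * conj v ≠ 0 := by
    intro h; apply hden; linear_combination -h
  constructor
  · rintro ⟨h1, h2⟩
    constructor
    · rw [eq_div_iff hden2]
      linear_combination (2*Complex.I*v)*h1 - (2*Complex.I*u)*h2 + (X*conj u*v - X*u*conj v)*Complex.I_sq
    · rw [eq_div_iff hdet]
      linear_combination v*h1 - u*h2
  · rintro ⟨-, hX⟩
    have hcX : conj X = (e*conj v - d*conj u)/(Complex.I/2*(u*conj v - conj u*v)) := by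
      rw [hX]
      rw [map_div₀]
      congr 1
      · simp only [map_sub, map_mul, hce, hcd, Complex.conj_conj]
      · simp only [map_mul, map_sub, map_div₀, Complex.conj_I, Complex.conj_conj, map_ofNat]
        ring
    have hX' : X * (Complex.I/2*(u*conj v - conj u*v)) = e*v - d*u := by
      rw [hX, div_mul_cancel₀ _ hdet]
    have hcX' : conj X * (Complex.I/2*(u*conj v - conj u*v)) = e*conj v - d*conj u := by
      rw [hcX, div_mul_cancel₀ _ hdet]
    constructor
    · apply mul_right_cancel₀ hdet
      linear_combination (Complex.I/2*u)*hcX' - (Complex.I/2*conj u)*hX'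
    · apply mul_right_cancel₀ hdet
      linear_combination (Complex.I/2*v)*hcX' - (Complex.I/2*conj v)*hX'

theorem envelope_solution (A B : ℝ → ℂ) (A' B' : ℂ) (φ : ℝ)
    (hA : HasDerivAt A A' φ) (hB : HasDerivAt B B' φ)
    (hne : A φ ≠ B φ)
    (hdet : ext (A φ - B φ) (A' - B') ≠ 0) :
    ∀ X : ℂ,
      (ext (A φ - B φ) X = ext (A φ) (B φ) ∧
       ext (A' - B') X = deriv (fun t => ext (A t) (B t)) φ) ↔
      (X = (ext (A φ) (B φ) * (A' - B') -
              deriv (fun t => ext (A t) (B t)) φ * (A φ - B φ)) * (2 * Complex.I) /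
            ((starRingEnd ℂ) (A φ - B φ) * (A' - B') -
              (A φ - B φ) * (starRingEnd ℂ) (A' - B')) ∧
       X = (ext (A φ) (B φ) * (A' - B') -
              deriv (fun t => ext (A t) (B t)) φ * (A φ - B φ)) /
            ext (A φ - B φ) (A' - B')) := by
  intro X
  have hcA : HasDerivAt (fun t => conj (A t)) (conj A') φ := by simpa using hA.star
  have hcB : HasDerivAt (fun t => conj (B t)) (conj B') φ := by simpa using hB.star
  have hd0 : HasDerivAt (fun t => ext (A t) (B t))
      (Complex.I / 2 * ((A' * conj (B φ) + A φ * conj B') -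
        (conj A' * B φ + conj (A φ) * B'))) φ :=
    ((hA.mul hcB).sub (hcA.mul hB)).const_mul (Complex.I / 2)
  rw [hd0.deriv]
  have hce : conj (ext (A φ) (B φ)) = ext (A φ) (B φ) := by
    simp only [ext, map_mul, map_sub, map_div₀, Complex.conj_I, Complex.conj_conj, map_ofNat]
    ring
  have hcd : conj (Complex.I / 2 * ((A' * conj (B φ) + A φ * conj B') -
        (conj A' * B φ + conj (A φ) * B'))) = Complex.I / 2 * ((A' * conj (B φ) + A φ * conj B') -
        (conj A' * B φ + conj (A φ) * B')) := by
    simp only [map_mul, map_sub, map_add, map_div₀, Complex.conj_I, Complex.conj_conj, map_ofNat]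
    ring
  have hdet' : Complex.I/2*((A φ - B φ)*conj (A' - B') - conj (A φ - B φ) * (A' - B')) ≠ 0 := hdet
  exact key (A φ - B φ) (A' - B') (ext (A φ) (B φ)) _ X hce hcd hdet'
end

section
/- Let X_P : ℝ → ℂ be a regular curve, T(φ) = X_P'(φ)/|X_P'(φ)| its unit tangent, and suppose T'(φ) = i·h(φ)·T(φ) with real h(φ) ≠ 0. Fix real constants α, and let λ : ℝ → ℝ be differentiable with λ'(φ) = −|X_P'(φ)|. Define the family of lines through X_P(φ) + λ(φ)·T(φ) with direction i·exp(±iα)·T(φ). Then the envelope of this family is the curve X_F(φ) = X_P(φ) + λ(φ)·T(φ)·exp(±iα)·cos α. -/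
open Complex (I)
open ComplexConjugate

lemma ext_eq_im (A B : ℂ) : ext A B = ((conj A * B).im : ℂ) := by
  apply Complex.ext <;> simp [ext]; ring

lemma ext_I_mul_left (A B : ℂ) : ext (I * A) B = ((-(conj A * B).re : ℝ) : ℂ) := by
  apply Complex.ext <;> simp [ext]; ring

lemma ext_self (A : ℂ) : ext A A = 0 := by
  simp only [ext]; ring

lemma ext_sub_left (A B C : ℂ) : ext (A - B) C = ext A C - ext B C := by
  simp only [ext, map_sub]; ring

lemma ext_add_right (A B C : ℂ) : ext A (B + C) = ext A B + ext A C := by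
  simp only [ext, map_add]; ring

lemma ext_sub_right (A B C : ℂ) : ext A (B - C) = ext A B - ext A C := by
  simp only [ext, map_sub]; ring

lemma HasDerivAt.ext {f g : ℝ → ℂ} {f' g' : ℂ} {t : ℝ} (hf : HasDerivAt f f' t)
    (hg : HasDerivAt g g' t) :
    HasDerivAt (fun s => ext (f s) (g s)) (ext f' (g t) + ext (f t) g') t :=
  (((hf.fun_mul hg.star).fun_sub (hf.star.fun_mul hg)).const_mul (I / 2)).congr_deriv
    (by simp only [_root_.ext, starRingEnd_apply]; ring)

lemma ext_eq_zero_and_ext_I_mul_eq_zero_iff {D Y : ℂ} (hD : D ≠ 0) :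
    ext D Y = 0 ∧ ext (I * D) Y = 0 ↔ Y = 0 := by
  rw [ext_eq_im, ext_I_mul_left, Complex.ofReal_eq_zero, Complex.ofReal_eq_zero, neg_eq_zero,
    and_comm, ← mul_right_inj' (show conj D ≠ 0 from (map_ne_zero _).mpr hD), mul_zero,
    Complex.ext_iff, Complex.zero_re, Complex.zero_im]

-- `ext D Y = 0` says that `Y` is parallel to `D`, and `ext (I * D) Y = 0` that it is perpendicular.
lemma ext_sub_eq_zero_and_ext_I_mul_sub_eq_zero_iff {D B P F : ℂ} (hD : D ≠ 0)
    (hFB : ext D (F - B) = 0) (hFP : ext (I * D) (F - P) = 0) (X : ℂ) :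
    ext D (X - B) = 0 ∧ ext (I * D) (X - P) = 0 ↔ X = F := by
  rw [show X - B = X - F + (F - B) by ring, show X - P = X - F + (F - P) by ring,
    ext_add_right, ext_add_right, hFB, hFP, add_zero, add_zero,
    ext_eq_zero_and_ext_I_mul_eq_zero_iff hD, sub_eq_zero]

theorem envelope_iff_of_hasDerivAt_rotation {A B : ℝ → ℂ} {P : ℂ} {ω t : ℝ}
    (hω : ω ≠ 0) (hA : HasDerivAt A (I * ω * (A t - P)) t)
    (hB : HasDerivAt B (I * ω * (B t - P)) t)
    (X : ℂ) :
    (ext (A t - B t) X = ext (A t) (B t) ∧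
      ext (deriv (fun s => A s - B s) t) X = deriv (fun s => ext (A s) (B s)) t) ↔
      ext (A t - B t) (X - B t) = 0 ∧ ext (I * (A t - B t)) (X - P) = 0 := by
  rw [(hA.fun_sub hB).deriv, (hA.ext hB).deriv]
  refine and_congr ?_ ?_
  · rw [ext_sub_right, sub_eq_zero, ext_sub_left (A t) (B t) (B t), ext_self, sub_zero]
  · have key : ext (I * ω * (A t - P) - I * ω * (B t - P)) X -
        (ext (I * ω * (A t - P)) (B t) + ext (A t) (I * ω * (B t - P))) =
        ω * ext (I * (A t - B t)) (X - P) := by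
      simp only [ext, map_mul, map_sub, Complex.conj_I, Complex.conj_ofReal]; ring
    rw [← sub_eq_zero, key, mul_eq_zero, Complex.ofReal_eq_zero, or_iff_right hω]

lemma hasDerivAt_add_mul_of_rolling {X T : ℝ → ℂ} {lam : ℝ → ℝ} {ω v t : ℝ}
    (hX : HasDerivAt X (v * T t) t) (hlam : HasDerivAt lam (-v) t)
    (hT : HasDerivAt T (I * ω * T t) t) :
    HasDerivAt (fun s => X s + lam s * T s) (I * ω * (lam t * T t)) t :=
  (hX.fun_add (hlam.ofReal_comp.fun_mul hT)).congr_deriv (by push_cast; ring)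

lemma ext_flank_foot_iff {E T P X : ℂ} {lam c : ℝ} (hT : T ≠ 0) (hE : E * conj E = 1)
    (hc : E + conj E = 2 * c) :
    ext (I * E * T) (X - (P + lam * T)) = 0 ∧ ext (I * (I * E * T)) (X - P) = 0 ↔
      X = P + lam * T * E * c := by
  have hD : I * E * T ≠ 0 :=
    mul_ne_zero (mul_ne_zero Complex.I_ne_zero (left_ne_zero_of_mul_eq_one hE)) hT
  refine ext_sub_eq_zero_and_ext_I_mul_sub_eq_zero_iff hD ?_ ?_ X
  · simp only [ext, map_mul, map_add, map_sub, Complex.conj_I, Complex.conj_ofReal]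
    linear_combination (I / 2 * I * lam * T * conj T) * (2 * c * hE - hc)
  · simp only [ext, map_mul, map_add, map_sub, Complex.conj_I, Complex.conj_ofReal]; ring

lemma exp_ofReal_mul_I_mul_conj (x : ℝ) :
    Complex.exp (x * I) * conj (Complex.exp (x * I)) = 1 := by
  rw [Complex.mul_conj, Complex.normSq_eq_norm_sq, Complex.norm_exp_ofReal_mul_I, one_pow,
    Complex.ofReal_one]

lemma exp_ofReal_mul_I_add_conj (x : ℝ) :
    Complex.exp (x * I) + conj (Complex.exp (x * I)) = 2 * Real.cos x := by
  rw [Complex.add_conj, Complex.exp_ofReal_mul_I_re, Complex.ofReal_mul, Complex.ofReal_ofNat]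

/-- The envelope of the family of rack-cutter flank lines is the flank curve
`X_F(φ) = X_P(φ) + λ(φ)·T(φ)·e^{±iα}·cos α`. -/
theorem flank_curve_envelope
    (X_P T : ℝ → ℂ) (h lam : ℝ → ℝ) (α ε : ℝ)
    (hε : ε = 1 ∨ ε = -1)
    (hreg : ∀ t, deriv X_P t ≠ 0)
    (hT : ∀ t, T t = deriv X_P t / (‖deriv X_P t‖ : ℂ))
    (hT' : ∀ t, HasDerivAt T (Complex.I * (h t : ℂ) * T t) t)
    (hh : ∀ t, h t ≠ 0)
    (hlam : ∀ t, HasDerivAt lam (-(‖deriv X_P t‖)) t)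
    (A B : ℝ → ℂ)
    (hA : ∀ t, A t = X_P t + (lam t : ℂ) * T t +
      Complex.I * Complex.exp ((ε : ℂ) * α * Complex.I) * T t)
    (hB : ∀ t, B t = X_P t + (lam t : ℂ) * T t)
    (φ : ℝ) :
    ∀ X : ℂ,
      (ext (A φ - B φ) X = ext (A φ) (B φ) ∧
       ext (deriv (fun t => A t - B t) φ) X = deriv (fun t => ext (A t) (B t)) φ) ↔
      X = X_P φ + (lam φ : ℂ) * T φ * Complex.exp ((ε : ℂ) * α * Complex.I) *
            (Real.cos α : ℂ) := by
  intro X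
  have hnorm : (‖deriv X_P φ‖ : ℂ) ≠ 0 :=
    Complex.ofReal_ne_zero.mpr (norm_ne_zero_iff.mpr (hreg φ))
  have hXP : HasDerivAt X_P (‖deriv X_P φ‖ * T φ) φ := by
    rw [hT φ, mul_div_cancel₀ _ hnorm]
    exact (differentiableAt_of_deriv_ne_zero (hreg φ)).hasDerivAt
  have hBd : HasDerivAt B (I * h φ * (B φ - X_P φ)) φ := by
    rw [funext hB, add_sub_cancel_left]
    exact hasDerivAt_add_mul_of_rolling hXP (hlam φ) (hT' φ)
  set E := Complex.exp ((ε : ℂ) * α * I) with hE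
  have hAd : HasDerivAt A (I * h φ * (A φ - X_P φ)) φ := by
    have hsum := hBd.fun_add ((hT' φ).const_mul (I * E))
    rw [show (fun t => B t + I * E * T t) = A from funext fun t => by rw [hA t, hB t]] at hsum
    exact hsum.congr_deriv (by rw [hA φ, hB φ]; ring)
  have hE_ofReal : E = Complex.exp ((ε * α : ℝ) * I) := by rw [hE, Complex.ofReal_mul]
  have hcos : E + conj E = 2 * Real.cos α := by
    rw [hE_ofReal, exp_ofReal_mul_I_add_conj]
    rcases hε with rfl | rfl <;> simp
  have hAB : A φ - B φ = I * E * T φ := by rw [hA φ, hB φ]; ring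
  rw [envelope_iff_of_hasDerivAt_rotation (hh φ) hAd hBd, hAB, hB φ]
  exact ext_flank_foot_iff (by rw [hT φ]; exact div_ne_zero (hreg φ) hnorm)
    (by rw [hE_ofReal, exp_ofReal_mul_I_mul_conj]) hcos
end

section
/- Let ψ be three times differentiable with ψ' > 0, a > 0, and w(φ) = sqrt(ψ''² + ψ'²(1+ψ')²) > 0. The oriented curvature of the driven-gear centrode Ξ_P(φ) = −(a/(1+ψ'))·e^{iψ(φ)} is κ̃(φ) = (1+ψ'(φ))³·[ψ'(φ)(ψ'''(φ) + ψ'(φ)² + ψ'(φ)³) − ψ''(φ)²] / (a·w(φ)³). -/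
/-!
Writing the velocity as `V = ‖V‖ T`, the curvature of any regular plane curve is
`κ = Im (conj V · V') / ‖V‖³`. For the centrode the velocity factors as
`V = g · U · exp (iψ)` with `g = a / (1 + ψ')² > 0` and `U = ψ'' - iψ'(1 + ψ')`, and the formula
becomes `κ = (Im (conj U · U') + ψ' ‖U‖²) / (g ‖U‖³)`, where `‖U‖ = w`.
-/

open Complex ComplexConjugate

theorem curvature_eq_im_conj_mul_div {V : ℝ → ℂ} {V' : ℂ} {t κ : ℝ}
    (hV : HasDerivAt V V' t) (h0 : V t ≠ 0)
    (hκ : deriv (fun s => V s / (‖V s‖ : ℂ)) t = (‖V t‖ : ℂ) * κ * I * (V t / ‖V t‖)) :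
    κ = (conj (V t) * V').im / ‖V t‖ ^ 3 := by
  set n' := deriv (fun s => ‖V s‖) t
  have hn : HasDerivAt (fun s => ‖V s‖) n' t := (hV.differentiableAt.norm ℂ h0).hasDerivAt
  have hn0 : (‖V t‖ : ℂ) ≠ 0 := by simpa using h0
  rw [(hV.fun_div hn.ofReal_comp hn0).deriv] at hκ
  -- the speed `n'` only enters through a real term, invisible to the imaginary part
  have key : conj (V t) * V' * ‖V t‖ - (‖V t‖ : ℂ) ^ 2 * n' = κ * ‖V t‖ ^ 4 * I := by
    have hsq : conj (V t) * V t = (‖V t‖ : ℂ) ^ 2 := conj_mul' _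
    field_simp at hκ
    linear_combination conj (V t) * hκ + (n' + (‖V t‖ : ℂ) ^ 2 * κ * I) * hsq
  generalize conj (V t) * V' = z at key ⊢
  have him := congrArg im key
  simp only [← ofReal_pow, ← ofReal_mul, sub_im, mul_im, ofReal_re, ofReal_im, I_re, I_im] at him
  have hz : z.im = κ * ‖V t‖ ^ 3 :=
    mul_right_cancel₀ (norm_ne_zero_iff.mpr h0) (by linear_combination him)
  rw [hz, mul_div_cancel_right₀ _ (pow_ne_zero 3 (norm_ne_zero_iff.mpr h0))]

theorem curvature_eq_of_eq_real_mul_mul_exp {V U : ℝ → ℂ} {g θ : ℝ → ℝ} {U' : ℂ} {θ' t κ : ℝ}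
    (hV : ∀ s, V s = g s * U s * exp (θ s * I))
    (hg : DifferentiableAt ℝ g t) (hU : HasDerivAt U U' t) (hθ : HasDerivAt θ θ' t)
    (hg0 : 0 < g t) (hU0 : U t ≠ 0)
    (hκ : deriv (fun s => V s / (‖V s‖ : ℂ)) t = (‖V t‖ : ℂ) * κ * I * (V t / ‖V t‖)) :
    κ = ((conj (U t) * U').im + θ' * ‖U t‖ ^ 2) / (g t * ‖U t‖ ^ 3) := by
  have hE : HasDerivAt (fun s => exp (θ s * I)) (θ' * I * exp (θ t * I)) t := by
    simpa only [mul_comm] using (hθ.ofReal_comp.mul_const I).cexp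
  set E := exp (θ t * I)
  set g' := deriv g t
  have hVt : V t = g t * U t * E := hV t
  have hVd : HasDerivAt V ((g' * U t + g t * U') * E + g t * U t * (θ' * I * E)) t := by
    rw [show V = _ from funext hV]
    exact (hg.hasDerivAt.ofReal_comp.mul hU).mul hE
  have hEE : conj E * E = 1 := by
    rw [conj_mul', norm_exp_ofReal_mul_I, ofReal_one, one_pow]
  have hUU : conj (U t) * U t = (‖U t‖ : ℂ) ^ 2 := conj_mul' _
  have hnorm : ‖V t‖ = g t * ‖U t‖ := by
    rw [hVt, norm_mul, norm_mul, norm_exp_ofReal_mul_I, mul_one, norm_real,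
      Real.norm_of_nonneg hg0.le]
  have hV0 : V t ≠ 0 := by
    rw [← norm_ne_zero_iff, hnorm]
    exact mul_ne_zero hg0.ne' (norm_ne_zero_iff.mpr hU0)
  have hprod : conj (V t) * ((g' * U t + g t * U') * E + g t * U t * (θ' * I * E)) =
      (g t * g' * ‖U t‖ ^ 2 : ℝ) + (g t ^ 2 : ℝ) * (conj (U t) * U')
        + (g t ^ 2 * θ' * ‖U t‖ ^ 2 : ℝ) * I := by
    rw [hVt, map_mul, map_mul, conj_ofReal]
    push_cast
    linear_combination
      (g t * g' * conj (U t) * U t + g t ^ 2 * conj (U t) * U'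
        + g t ^ 2 * θ' * I * conj (U t) * U t) * hEE
      + (g t * g' + g t ^ 2 * θ' * I) * hUU
  rw [curvature_eq_im_conj_mul_div hVd hV0 hκ, hprod, hnorm]
  simp only [add_im, ofReal_im, mul_im, ofReal_re, I_re, I_im]
  field_simp
  ring

theorem hasDerivAt_centrode {ψ ψ' ψ'' : ℝ → ℝ} {a t : ℝ}
    (hψ : HasDerivAt ψ (ψ' t) t) (hψ' : HasDerivAt ψ' (ψ'' t) t) (h1 : 1 + ψ' t ≠ 0) :
    HasDerivAt (fun s => -((a / (1 + ψ' s) : ℝ) : ℂ) * exp (ψ s * I))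
      ((a / (1 + ψ' t) ^ 2 : ℝ) * (ψ'' t - ψ' t * (1 + ψ' t) * I) * exp (ψ t * I)) t := by
  have hE : HasDerivAt (fun s => exp (ψ s * I)) (ψ' t * I * exp (ψ t * I)) t := by
    simpa only [mul_comm] using (hψ.ofReal_comp.mul_const I).cexp
  have hc := ((hasDerivAt_const t a).fun_div (hψ'.const_add 1) h1).ofReal_comp
  have h1C : (1 + ψ' t : ℂ) ≠ 0 := by exact_mod_cast h1
  refine ((hc.fun_mul hE).fun_neg.congr_deriv ?_).congr_of_eventuallyEq
    (.of_forall fun s => neg_mul _ _)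
  push_cast
  field_simp
  ring

theorem curvature_centrode_driven
    (ψ ψ' ψ'' ψ''' : ℝ → ℝ) (a : ℝ) (ha : 0 < a)
    (hd1 : ∀ t, HasDerivAt ψ (ψ' t) t)
    (hd2 : ∀ t, HasDerivAt ψ' (ψ'' t) t)
    (hd3 : ∀ t, HasDerivAt ψ'' (ψ''' t) t)
    (hpos : ∀ t, 0 < ψ' t)
    (w : ℝ → ℝ)
    (hw : ∀ t, w t = Real.sqrt ((ψ'' t) ^ 2 + (ψ' t) ^ 2 * (1 + ψ' t) ^ 2))
    (hwpos : ∀ t, 0 < w t)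
    (Ξ_P : ℝ → ℂ)
    (hΞ : ∀ t, Ξ_P t =
      -((a / (1 + ψ' t) : ℝ) : ℂ) * Complex.exp ((ψ t : ℂ) * Complex.I))
    (T : ℝ → ℂ)
    (hT : ∀ t, T t = deriv Ξ_P t / (‖deriv Ξ_P t‖ : ℂ))
    (κ : ℝ → ℝ)
    (hκ : ∀ t, deriv T t =
      ((‖deriv Ξ_P t‖ : ℝ) : ℂ) * (κ t : ℂ) * Complex.I * T t)
    (φ : ℝ) :
    κ φ = (1 + ψ' φ) ^ 3 *
        (ψ' φ * (ψ''' φ + (ψ' φ) ^ 2 + (ψ' φ) ^ 3) - (ψ'' φ) ^ 2) / (a * (w φ) ^ 3) := by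
  have h1 : ∀ t, 0 < 1 + ψ' t := fun t => by linarith [hpos t]
  set U : ℝ → ℂ := fun s => ψ'' s - ψ' s * (1 + ψ' s) * I
  have hU : HasDerivAt U (ψ''' φ - (ψ'' φ * (1 + ψ' φ) + ψ' φ * ψ'' φ) * I) φ :=
    (hd3 φ).ofReal_comp.fun_sub
      (((hd2 φ).ofReal_comp.fun_mul ((hd2 φ).ofReal_comp.const_add 1)).mul_const I)
  have hnormU : ‖U φ‖ = w φ := by
    have hUφ : U φ = ψ'' φ + (-(ψ' φ * (1 + ψ' φ)) : ℝ) * I := by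
      simp only [U]; push_cast; ring
    rw [hUφ, norm_add_mul_I, hw]
    ring_nf
  have hV : ∀ s, deriv Ξ_P s = (a / (1 + ψ' s) ^ 2 : ℝ) * U s * exp (ψ s * I) := fun s => by
    rw [show Ξ_P = _ from funext hΞ]
    exact (hasDerivAt_centrode (hd1 s) (hd2 s) (h1 s).ne').deriv
  rw [show T = _ from funext hT] at hκ
  have hg : DifferentiableAt ℝ (fun s => a / (1 + ψ' s) ^ 2) φ :=
    (differentiableAt_const a).div (((hd2 φ).differentiableAt.const_add 1).pow 2)
      (pow_ne_zero 2 (h1 φ).ne')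
  rw [curvature_eq_of_eq_real_mul_mul_exp hV hg hU (hd1 φ) (by have := h1 φ; positivity)
    (norm_pos_iff.mp (hnormU ▸ hwpos φ)) (hκ φ), hnormU]
  have hw2 : w φ ^ 2 = ψ'' φ ^ 2 + ψ' φ ^ 2 * (1 + ψ' φ) ^ 2 := by
    rw [hw, Real.sq_sqrt (by positivity)]
  have hnum : (conj (U φ) * (ψ''' φ - (ψ'' φ * (1 + ψ' φ) + ψ' φ * ψ'' φ) * I)).im
      + ψ' φ * w φ ^ 2 = (1 + ψ' φ) * (ψ' φ * (ψ''' φ + ψ' φ ^ 2 + ψ' φ ^ 3) - ψ'' φ ^ 2) := by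
    simp only [U, map_sub, conj_ofReal, map_mul, map_add, map_one, conj_I, mul_neg,
      sub_neg_eq_add, mul_im, add_re, ofReal_re, mul_re, one_re, ofReal_im, add_im, one_im,
      add_zero, mul_zero, sub_zero, I_re, zero_mul, I_im, mul_one, sub_self, sub_im, zero_sub,
      neg_add_rev, zero_add, sub_re]
    linear_combination ψ' φ * hw2
  rw [hnum]
  field_simp
end

section
/- Let ψ(φ) = φ − b·sin φ with b = 2 − √2, and let κ(φ) denote the oriented curvature of the centrode X_P(φ) = (ψ'(φ)/(1+ψ'(φ)))·e^{−iφ} (pivot distance a = 1), i.e. κ(φ) = (1+ψ')³·[ψ'(ψ''' − ψ' − ψ'²) − 2ψ''²]/w³ with w = sqrt(ψ''² + ψ'²(1+ψ')²). Then κ(φ) ≤ 0 for all 0 ≤ φ ≤ 2π, with equality exactly at φ = 0 and φ = 2π. -/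
/-!
Write `c = cos φ`. Using `sin² φ = 1 − c²`, the curvature numerator
`ψ'(ψ''' − ψ' − ψ'²) − 2ψ''²` is the cubic `b³c³ − 3b²c² + 6bc − 2 − 2b²`, whose value at `c = 1`
is `(b − 1)(b² − 4b + 2)`. The critical parameter `b = 2 − √2` is a root of `b² − 4b + 2`, so the
numerator factors as `b (c − 1) q(c)` with `4q(c) = (2bc + b − 3)² + 3(b − 1)² + 12 > 0`.
Since `ψ' > 0`, the factors `(1 + ψ')³` and `w³` are positive, so `κ` has the sign of `cos φ − 1`.
-/

open Real

theorem Real.cos_eq_one_iff_of_mem_Icc {φ : ℝ} (hφ : φ ∈ Set.Icc 0 (2 * π)) :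
    cos φ = 1 ↔ φ = 0 ∨ φ = 2 * π := by
  rcases hφ.2.lt_or_eq with hlt | rfl
  · rw [cos_eq_one_iff_of_lt_of_lt (by linarith [hφ.1, pi_pos]) hlt]
    simp [hlt.ne]
  · simp

namespace Centrode

def curvatureNumerator (p₁ p₂ p₃ : ℝ) : ℝ := p₁ * (p₃ - p₁ - p₁ ^ 2) - 2 * p₂ ^ 2

/-- The oriented curvature of the centrode in terms of `p₁ = ψ'`, `p₂ = ψ''`, `p₃ = ψ'''`. -/
noncomputable def curvature (p₁ p₂ p₃ : ℝ) : ℝ :=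
  (1 + p₁) ^ 3 * curvatureNumerator p₁ p₂ p₃ / √(p₂ ^ 2 + p₁ ^ 2 * (1 + p₁) ^ 2) ^ 3

section

variable {p₁ : ℝ} (p₂ p₃ : ℝ)

theorem curvature_eq_pos_mul_numerator (hp₁ : 0 < p₁) :
    ∃ k > 0, curvature p₁ p₂ p₃ = k * curvatureNumerator p₁ p₂ p₃ := by
  have hw : 0 < √(p₂ ^ 2 + p₁ ^ 2 * (1 + p₁) ^ 2) := sqrt_pos.mpr (by positivity)
  exact ⟨(1 + p₁) ^ 3 / √(p₂ ^ 2 + p₁ ^ 2 * (1 + p₁) ^ 2) ^ 3, by positivity,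
    by rw [curvature]; ring⟩

theorem curvature_nonpos_iff (hp₁ : 0 < p₁) :
    curvature p₁ p₂ p₃ ≤ 0 ↔ curvatureNumerator p₁ p₂ p₃ ≤ 0 := by
  obtain ⟨k, hk, h⟩ := curvature_eq_pos_mul_numerator p₂ p₃ hp₁
  simp [h, mul_nonpos_iff_pos_imp_nonpos, hk, hk.le]

theorem curvature_eq_zero_iff (hp₁ : 0 < p₁) :
    curvature p₁ p₂ p₃ = 0 ↔ curvatureNumerator p₁ p₂ p₃ = 0 := by
  obtain ⟨k, hk, h⟩ := curvature_eq_pos_mul_numerator p₂ p₃ hp₁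
  rw [h, mul_eq_zero_iff_left hk.ne']

end

def numeratorQuadratic (b c : ℝ) : ℝ := b ^ 2 * c ^ 2 + b * (b - 3) * c + (b ^ 2 - 3 * b + 6)

theorem numeratorQuadratic_pos (b c : ℝ) : 0 < numeratorQuadratic b c := by
  have h : 4 * numeratorQuadratic b c = (2 * b * c + b - 3) ^ 2 + 3 * (b - 1) ^ 2 + 12 := by
    rw [numeratorQuadratic]; ring
  linarith [sq_nonneg (2 * b * c + b - 3), sq_nonneg (b - 1)]

theorem curvatureNumerator_eq_mul_numeratorQuadratic {b c s : ℝ} (hb : b ^ 2 - 4 * b + 2 = 0)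
    (hsc : s ^ 2 + c ^ 2 = 1) :
    curvatureNumerator (1 - b * c) (b * s) (b * c) = b * (c - 1) * numeratorQuadratic b c := by
  rw [curvatureNumerator, numeratorQuadratic]
  linear_combination (-2 * b ^ 2) * hsc + (b - 1) * hb

end Centrode

open Centrode

/-- For the transmission function `ψ(φ) = φ − b sin φ` with `b = 2 − √2` and pivot
distance `a = 1`, the oriented curvature of the drive-gear centrode is nonpositive
on `[0, 2π]`, vanishing exactly at `φ = 0` and `φ = 2π`. -/
theorem centrode_curvature_example
    (b : ℝ) (hb : b = 2 - Real.sqrt 2)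
    (ψ' ψ'' ψ''' : ℝ → ℝ)
    (hψ' : ∀ t, ψ' t = 1 - b * Real.cos t)
    (hψ'' : ∀ t, ψ'' t = b * Real.sin t)
    (hψ''' : ∀ t, ψ''' t = b * Real.cos t)
    (w : ℝ → ℝ)
    (hw : ∀ t, w t = Real.sqrt ((ψ'' t) ^ 2 + (ψ' t) ^ 2 * (1 + ψ' t) ^ 2))
    (κ : ℝ → ℝ)
    (hκ : ∀ t, κ t = (1 + ψ' t) ^ 3 *
      (ψ' t * (ψ''' t - ψ' t - (ψ' t) ^ 2) - 2 * (ψ'' t) ^ 2) / (w t) ^ 3) :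
    ∀ φ : ℝ, φ ∈ Set.Icc (0 : ℝ) (2 * Real.pi) →
      κ φ ≤ 0 ∧ (κ φ = 0 ↔ φ = 0 ∨ φ = 2 * Real.pi) := by
  intro φ hφ
  have hb₀ : 0 < b := by rw [hb]; linarith [sqrt_two_lt_three_halves]
  have hb₁ : b < 1 := by rw [hb]; linarith [one_lt_sqrt_two]
  have hb_root : b ^ 2 - 4 * b + 2 = 0 := by
    rw [hb]; linear_combination sq_sqrt (zero_le_two : (0 : ℝ) ≤ 2)
  have hψ'_pos : 0 < ψ' φ := by
    rw [hψ']; nlinarith [cos_le_one φ]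
  have hκφ : κ φ = curvature (ψ' φ) (ψ'' φ) (ψ''' φ) := by rw [hκ, hw]; rfl
  have hN : curvatureNumerator (ψ' φ) (ψ'' φ) (ψ''' φ) =
      b * (cos φ - 1) * numeratorQuadratic b (cos φ) := by
    rw [hψ', hψ'', hψ''']
    exact curvatureNumerator_eq_mul_numeratorQuadratic hb_root (sin_sq_add_cos_sq φ)
  have hQ := numeratorQuadratic_pos b (cos φ)
  rw [hκφ, curvature_nonpos_iff _ _ hψ'_pos, curvature_eq_zero_iff _ _ hψ'_pos, hN,
    ← cos_eq_one_iff_of_mem_Icc hφ]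
  refine ⟨mul_nonpos_of_nonpos_of_nonneg
    (mul_nonpos_of_nonneg_of_nonpos hb₀.le (by linarith [cos_le_one φ])) hQ.le, ?_⟩
  simp [hb₀.ne', hQ.ne', sub_eq_zero]
end
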